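/- arXiv:1004.0830 — 2 statements merged into one kernel-verified Lean document; each statement's English description precedes it below -/
import Mathlib

section
/- Let (A_i)_{i∈ℕ} and (H_i)_{i∈ℕ} be inverse systems of topological spaces with continuous transition maps f_i: A_i → A_{i−1} and f'_i: H_i → H_{i−1} for i ≥ 1, and let Φ_i: A_i → H_i be continuous maps with f'_i ∘ Φ_i = Φ_{i−1} ∘ f_i. For i < j write f_{ij} = f_j ∘ … ∘ f_{i+1}, and let Φ: lim A_i → lim H_i be the induced map on inverse limits. Assume that each A_i is a Noetherian topological space (every descending chain of closed subsets stabilizes), and that for all i < j and every point h ∈ H_j the set f_{ij}(Φ_j^{-1}(h)) is closed in A_i and each Φ_i^{-1}(h) is closed in A_i. Then the image of Φ equals the inverse limit of the images of the Φ_i: every compatible family (h_i) ∈ lim H_i with h_i in the image of Φ_i for all i is of the form Φ(a) for some a ∈ lim A_i. -/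
/-!
Mittag-Leffler argument. The sets `S i k = f_{i,i+k}(Φ_{i+k}⁻¹(h_{i+k}))` form, for fixed `i`,
a descending chain of nonempty closed subsets of the Noetherian space `A i`, so they stabilize
to a nonempty set `T i`. Since `f_i(S (i+1) k) = S i (k+1)`, the stable sets satisfy
`T i ⊆ f_i(T (i+1))`, and a compatible family through the `T i` is then built by recursion.
-/

/-- The composite transition map `f_{i,i+k} : A_{i+k} → A_i` of an `ℕ`-indexed inverse
system with transition maps `f i : A_{i+1} → A i`. -/
def chain {A : ℕ → Type*} (f : ∀ i, A (i + 1) → A i) : ∀ (i k : ℕ), A (i + k) → A i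
  | _, 0 => id
  | i, (k + 1) => fun a => chain f i k (f (i + k) a)

theorem TopologicalSpace.NoetherianSpace.antitone_chain_condition {X : Type*}
    [TopologicalSpace X] [NoetherianSpace X] {s : ℕ → Set X} (hs : Antitone s)
    (hcl : ∀ n, IsClosed (s n)) : ∃ N, ∀ m, N ≤ m → s N = s m := by
  obtain ⟨N, hN⟩ := WellFoundedLT.antitone_chain_condition
    (α := Closeds X) (f := fun n => ⟨s n, hcl n⟩) fun _ _ hmn => hs hmn
  exact ⟨N, fun m hm => congrArg SetLike.coe (hN m hm)⟩

theorem exists_compatible_seq_of_subset_image {A : ℕ → Type*} (f : ∀ i, A (i + 1) → A i)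
    {T : ∀ i, Set (A i)} (hT₀ : (T 0).Nonempty) (hT : ∀ i, T i ⊆ f i '' T (i + 1)) :
    ∃ a : ∀ i, A i, (∀ i, f i (a (i + 1)) = a i) ∧ ∀ i, a i ∈ T i := by
  choose lift hlift_mem hlift using hT
  let a : ∀ i, T i := fun i =>
    Nat.rec ⟨hT₀.some, hT₀.some_mem⟩ (fun n x => ⟨lift n x.2, hlift_mem n x.2⟩) i
  exact ⟨fun i => (a i).1, fun i => hlift i (a i).2, fun i => (a i).2⟩

namespace chain

variable {A : ℕ → Type*} (f : ∀ i, A (i + 1) → A i)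

def image (P : ∀ n, Set (A n)) (i k : ℕ) : Set (A i) := chain f i k '' P (i + k)

variable {f}

@[simp]
theorem image_zero (P : ∀ n, Set (A n)) (i : ℕ) : image f P i 0 = P i :=
  Set.image_id _

theorem image_succ (P : ∀ n, Set (A n)) (i k : ℕ) :
    image f P i (k + 1) = image f (fun n => f n '' P (n + 1)) i k := by
  simp only [image, Set.image_image]
  rfl

/-- Peeling off the composite from the bottom instead of the top; stated for a whole family
`P` so that `P (i + 1 + k)` and `P (i + (k + 1))` never have to be identified. -/
theorem image_transition (P : ∀ n, Set (A n)) (i k : ℕ) :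
    f i '' image f P (i + 1) k = image f P i (k + 1) := by
  induction k generalizing P with
  | zero => simp [image, chain]
  | succ k ih => rw [image_succ, ih, image_succ P i (k + 1)]

theorem image_nonempty {P : ∀ n, Set (A n)} (hP : ∀ n, (P n).Nonempty) (i k : ℕ) :
    (image f P i k).Nonempty :=
  (hP (i + k)).image _

theorem image_antitone {P : ∀ n, Set (A n)} (hP : ∀ n, f n '' P (n + 1) ⊆ P n) (i : ℕ) :
    Antitone (image f P i) :=
  antitone_nat_of_succ_le fun k => by
    rw [image_succ]
    exact Set.image_mono (hP (i + k))

end chain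

open chain in
theorem exists_compatible_seq_mem_of_noetherianSpace {A : ℕ → Type*}
    [∀ i, TopologicalSpace (A i)] [∀ i, TopologicalSpace.NoetherianSpace (A i)]
    (f : ∀ i, A (i + 1) → A i) {P : ∀ n, Set (A n)} (hne : ∀ n, (P n).Nonempty)
    (hmaps : ∀ n, f n '' P (n + 1) ⊆ P n) (hclosed : ∀ i k, IsClosed (image f P i k)) :
    ∃ a : ∀ i, A i, (∀ i, f i (a (i + 1)) = a i) ∧ ∀ i, a i ∈ P i := by
  choose N hN using fun i => TopologicalSpace.NoetherianSpace.antitone_chain_condition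
    (image_antitone hmaps i) (hclosed i)
  have hsurj : ∀ i, image f P i (N i) ⊆ f i '' image f P (i + 1) (N (i + 1)) := fun i =>
    calc image f P i (N i) = image f P i (max (N i) (N (i + 1) + 1)) := hN i _ (le_max_left ..)
      _ ⊆ image f P i (N (i + 1) + 1) := image_antitone hmaps i (le_max_right ..)
      _ = f i '' image f P (i + 1) (N (i + 1)) := (image_transition P i _).symm
  obtain ⟨a, ha, ha_mem⟩ := exists_compatible_seq_of_subset_image f
    (image_nonempty hne 0 (N 0)) hsurj
  refine ⟨a, ha, fun i => ?_⟩
  simpa only [image_zero] using image_antitone hmaps i (Nat.zero_le (N i)) (ha_mem i)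

theorem image_of_limit_eq_limit_of_images_general
    (A H : ℕ → Type*)
    [∀ i, TopologicalSpace (A i)]
    [∀ i, TopologicalSpace.NoetherianSpace (A i)]
    (f : ∀ i, A (i + 1) → A i) (f' : ∀ i, H (i + 1) → H i)
    (Φ : ∀ i, A i → H i)
    (hcomm : ∀ i (a : A (i + 1)), f' i (Φ (i + 1) a) = Φ i (f i a))
    (hclosed : ∀ (i k : ℕ) (h : H (i + k)),
      IsClosed (chain f i k '' (Φ (i + k) ⁻¹' {h})))
    (h : ∀ i, H i) (hcompat : ∀ i, f' i (h (i + 1)) = h i)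
    (himage : ∀ i, ∃ a : A i, Φ i a = h i) :
    ∃ a : ∀ i, A i, (∀ i, f i (a (i + 1)) = a i) ∧ (∀ i, Φ i (a i) = h i) := by
  have hmaps : ∀ n, f n '' (Φ (n + 1) ⁻¹' {h (n + 1)}) ⊆ Φ n ⁻¹' {h n} := by
    rintro n _ ⟨a, ha, rfl⟩
    simp only [Set.mem_preimage, Set.mem_singleton_iff] at ha ⊢
    rw [← hcomm, ha, hcompat]
  exact exists_compatible_seq_mem_of_noetherianSpace f himage hmaps
    fun i k => hclosed i k (h (i + k))

/-- Given `ℕ`-indexed inverse systems of topological spaces `(A_i, f_i)` and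
`(H_i, f'_i)` with continuous transition maps and continuous compatible maps
`Φ_i : A_i → H_i`, if each `A_i` is a Noetherian topological space and for all
`i ≤ j` (written `j = i + k`) and every `h ∈ H_j` the set `f_{ij}(Φ_j⁻¹(h))` is
closed in `A_i` (the case `k = 0` saying that each fibre `Φ_i⁻¹(h)` is closed), then
the image of the induced map `Φ : lim A_i → lim H_i` is the inverse limit of the
images of the `Φ_i`: every compatible family `(h_i)` with each `h_i` in the image of
`Φ_i` comes from a compatible family `(a_i)` with `Φ_i(a_i) = h_i` for all `i`. -/
theorem image_of_limit_eq_limit_of_images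
    (A H : ℕ → Type*)
    [∀ i, TopologicalSpace (A i)] [∀ i, TopologicalSpace (H i)]
    [∀ i, TopologicalSpace.NoetherianSpace (A i)]
    (f : ∀ i, A (i + 1) → A i) (f' : ∀ i, H (i + 1) → H i)
    (hf : ∀ i, Continuous (f i)) (hf' : ∀ i, Continuous (f' i))
    (Φ : ∀ i, A i → H i) (hΦ : ∀ i, Continuous (Φ i))
    (hcomm : ∀ i (a : A (i + 1)), f' i (Φ (i + 1) a) = Φ i (f i a))
    (hclosed : ∀ (i k : ℕ) (h : H (i + k)),
      IsClosed (chain f i k '' (Φ (i + k) ⁻¹' {h})))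
    (h : ∀ i, H i) (hcompat : ∀ i, f' i (h (i + 1)) = h i)
    (himage : ∀ i, ∃ a : A i, Φ i a = h i) :
    ∃ a : ∀ i, A i, (∀ i, f i (a (i + 1)) = a i) ∧ (∀ i, Φ i (a i) = h i) :=
  image_of_limit_eq_limit_of_images_general A H f f' Φ hcomm hclosed h hcompat himage
end

section
/- Let n ≥ 1, fix i ∈ {1,…,n}, and let b_1,…,b_n be integers with b_i = 0. Let h, h', g_1,…,g_n be integers with g_i = h − h', and for j ≠ i set g'_j = g_j − h'·[b_j]_+ + h·[−b_j]_+, where [a]_+ = max(a,0). In the field ℚ(x_1,…,x_n) of rational functions in n variables over ℚ, set ŷ = ∏_{ℓ=1}^n x_ℓ^{b_ℓ} and X* = x_i^{-1}·(∏_{ℓ=1}^n x_ℓ^{[b_ℓ]_+} + ∏_{ℓ=1}^n x_ℓ^{[−b_ℓ]_+}). Then the following identity holds: (X*)^{−g_i} · (∏_{j≠i} x_j^{g'_j}) · (1 + ŷ^{-1})^{−h'} · (1 + ŷ)^{h} · ∏_{ℓ=1}^n x_ℓ^{−g_ℓ} = 1. -/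
/-!
Write `P = x^{b⁺}` and `M = x^{b⁻}` for the Laurent monomials of the positive and negative parts
of `b`. Then `ŷ = P / M`, so `1 + ŷ = (P + M) / M`, `1 + ŷ⁻¹ = (P + M) / P` and
`X* = (P + M) / x_i`. The powers of the binomial `P + M` cancel because `-g_i - h' + h = 0`, and
what remains is a single Laurent monomial whose exponent vector vanishes: completing `g'` by
`g'_i = g_i` gives `g' = g - h' b⁺ + h b⁻`, using `b_i = 0`.
-/

open Finset Function MvPolynomial

section LaurentMonomial

variable {K ι : Type*} [Field K] [Fintype ι]

def laurentMonomial (x : ι → K) (e : ι → ℤ) : K := ∏ ℓ, x ℓ ^ e ℓ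

variable {x : ι → K}

theorem laurentMonomial_ne_zero (hx : ∀ ℓ, x ℓ ≠ 0) (e : ι → ℤ) :
    laurentMonomial x e ≠ 0 :=
  prod_ne_zero_iff.mpr fun ℓ _ => zpow_ne_zero _ (hx ℓ)

theorem laurentMonomial_zero (x : ι → K) : laurentMonomial x 0 = 1 := by
  simp [laurentMonomial]

theorem laurentMonomial_add (hx : ∀ ℓ, x ℓ ≠ 0) (e f : ι → ℤ) :
    laurentMonomial x (e + f) = laurentMonomial x e * laurentMonomial x f := by
  simp only [laurentMonomial, Pi.add_apply, zpow_add₀ (hx _), prod_mul_distrib]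

theorem laurentMonomial_neg (x : ι → K) (e : ι → ℤ) :
    laurentMonomial x (-e) = (laurentMonomial x e)⁻¹ := by
  simp only [laurentMonomial, Pi.neg_apply, zpow_neg, prod_inv_distrib]

theorem laurentMonomial_smul (x : ι → K) (k : ℤ) (e : ι → ℤ) :
    laurentMonomial x (k • e) = laurentMonomial x e ^ k := by
  simp only [laurentMonomial, Pi.smul_apply, smul_eq_mul, ← prod_zpow, ← zpow_mul, mul_comm]

theorem laurentMonomial_eq_mul_inv (hx : ∀ ℓ, x ℓ ≠ 0) (e : ι → ℤ) :
    laurentMonomial x e = laurentMonomial x e⁺ * (laurentMonomial x e⁻)⁻¹ := by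
  rw [← laurentMonomial_neg, ← laurentMonomial_add hx, ← sub_eq_add_neg, posPart_sub_negPart]

theorem laurentMonomial_one_add (hx : ∀ ℓ, x ℓ ≠ 0) (e : ι → ℤ) :
    1 + laurentMonomial x e =
      (laurentMonomial x e⁺ + laurentMonomial x e⁻) * (laurentMonomial x e⁻)⁻¹ := by
  rw [laurentMonomial_eq_mul_inv hx, add_mul, mul_inv_cancel₀ (laurentMonomial_ne_zero hx _),
    add_comm]

theorem laurentMonomial_one_add_inv (hx : ∀ ℓ, x ℓ ≠ 0) (e : ι → ℤ) :
    1 + (laurentMonomial x e)⁻¹ =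
      (laurentMonomial x e⁺ + laurentMonomial x e⁻) * (laurentMonomial x e⁺)⁻¹ := by
  rw [laurentMonomial_eq_mul_inv hx, mul_inv, inv_inv, add_mul,
    mul_inv_cancel₀ (laurentMonomial_ne_zero hx _), mul_comm]

theorem laurentMonomial_zpow_mul_prod_erase [DecidableEq ι] (i : ι) (c : ℤ) (e : ι → ℤ) :
    x i ^ c * ∏ j ∈ univ.erase i, x j ^ e j = laurentMonomial x (update e i c) := by
  rw [laurentMonomial, ← mul_prod_erase univ _ (mem_univ i), update_self]
  congr 1
  exact prod_congr rfl fun j hj => by rw [update_of_ne (ne_of_mem_erase hj)]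

theorem laurentMonomial_mutation_identity [DecidableEq ι] (hx : ∀ ℓ, x ℓ ≠ 0)
    (i : ι) (b : ι → ℤ) (hb : b i = 0) (h h' : ℤ) (g g' : ι → ℤ) (hg : g i = h - h')
    (hg' : ∀ j, j ≠ i → g' j = g j - h' * b⁺ j + h * b⁻ j)
    (hS : laurentMonomial x b⁺ + laurentMonomial x b⁻ ≠ 0) :
    ((x i)⁻¹ * (laurentMonomial x b⁺ + laurentMonomial x b⁻)) ^ (-g i) *
        (∏ j ∈ univ.erase i, x j ^ g' j) * (1 + (laurentMonomial x b)⁻¹) ^ (-h') *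
        (1 + laurentMonomial x b) ^ h * laurentMonomial x (-g) = 1 := by
  set S := laurentMonomial x b⁺ + laurentMonomial x b⁻
  have hexp : update g' i (g i) = g + (-h') • b⁺ + h • b⁻ := by
    funext j
    rcases eq_or_ne j i with rfl | hj
    · simp [hb]
    · simp [update_of_ne hj, hg' j hj, sub_eq_add_neg]
  calc _ = S ^ (-g i + -h' + h) * (x i ^ g i * ∏ j ∈ univ.erase i, x j ^ g' j) *
          laurentMonomial x b⁺ ^ h' * laurentMonomial x b⁻ ^ (-h) * laurentMonomial x (-g) := by
        rw [laurentMonomial_one_add_inv hx, laurentMonomial_one_add hx, zpow_add₀ hS,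
          zpow_add₀ hS]
        simp only [mul_zpow, inv_zpow', neg_neg]
        ring
    _ = laurentMonomial x (g + (-h') • b⁺ + h • b⁻ + h' • b⁺ + (-h) • b⁻ + -g) := by
        rw [show -g i + -h' + h = 0 by omega, zpow_zero, one_mul,
          laurentMonomial_zpow_mul_prod_erase, hexp]
        simp only [laurentMonomial_add hx, laurentMonomial_smul]
    _ = 1 := by
        rw [show g + (-h') • b⁺ + h • b⁻ + h' • b⁺ + (-h) • b⁻ + -g = 0 by module,
          laurentMonomial_zero]

end LaurentMonomial

section FractionField

variable {ι k : Type*} [Field k]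

local notation "𝕂" => FractionRing (MvPolynomial ι k)

theorem algebraMap_X_ne_zero (ℓ : ι) : algebraMap (MvPolynomial ι k) 𝕂 (X ℓ) ≠ 0 :=
  (map_ne_zero_iff _ (IsFractionRing.injective _ _)).mpr (X_ne_zero ℓ)

variable [Fintype ι]

theorem laurentMonomial_algebraMap_X_of_nonneg {e : ι → ℤ} (he : 0 ≤ e) :
    laurentMonomial (fun ℓ => algebraMap (MvPolynomial ι k) 𝕂 (X ℓ)) e =
      algebraMap (MvPolynomial ι k) 𝕂 (∏ ℓ, X ℓ ^ (e ℓ).toNat) := by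
  rw [laurentMonomial, map_prod]
  refine prod_congr rfl fun ℓ _ => ?_
  rw [map_pow, ← zpow_natCast, Int.toNat_of_nonneg (he ℓ)]

-- Both monomials evaluate to `1` at `(1, …, 1)`, so their sum is not zero.
theorem laurentMonomial_algebraMap_X_add_ne_zero [CharZero k] {e f : ι → ℤ} (he : 0 ≤ e)
    (hf : 0 ≤ f) :
    laurentMonomial (fun ℓ => algebraMap (MvPolynomial ι k) 𝕂 (X ℓ)) e +
      laurentMonomial (fun ℓ => algebraMap (MvPolynomial ι k) 𝕂 (X ℓ)) f ≠ 0 := by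
  rw [laurentMonomial_algebraMap_X_of_nonneg he, laurentMonomial_algebraMap_X_of_nonneg hf,
    ← map_add, map_ne_zero_iff _ (IsFractionRing.injective _ _)]
  intro h0
  have := congrArg (MvPolynomial.eval fun _ => (1 : k)) h0
  norm_num at this

end FractionField

theorem substitution_identity_general
    (n : ℕ) (i : Fin n) (b : Fin n → ℤ) (hb : b i = 0)
    (h h' : ℤ) (g g' : Fin n → ℤ)
    (hg : g i = h - h')
    (hg' : ∀ j : Fin n, j ≠ i → g' j = g j - h' * max (b j) 0 + h * max (- b j) 0) :
    let K := FractionRing (MvPolynomial (Fin n) ℚ)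
    let x : Fin n → K := fun ℓ => algebraMap (MvPolynomial (Fin n) ℚ) K (X ℓ)
    let yhat : K := ∏ ℓ, x ℓ ^ (b ℓ)
    let Xstar : K := (x i)⁻¹ *
      ((∏ ℓ, x ℓ ^ (max (b ℓ) 0)) + ∏ ℓ, x ℓ ^ (max (- b ℓ) 0))
    Xstar ^ (- g i) * (∏ j ∈ Finset.univ.erase i, x j ^ (g' j)) *
        (1 + yhat⁻¹) ^ (- h') * (1 + yhat) ^ h * (∏ ℓ, x ℓ ^ (- g ℓ)) = 1 :=
  laurentMonomial_mutation_identity algebraMap_X_ne_zero i b hb h h' g g' hg hg'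
    (laurentMonomial_algebraMap_X_add_ne_zero (posPart_nonneg b) (negPart_nonneg b))

/-- The key computational identity in the proof of the substitution formula for
cluster characters (Corollary 4.14 of the paper): in the rational function field
`ℚ(x₁,…,x_n)`, with `b_i = 0`, `g_i = h - h'` and
`g'_j = g_j - h'·[b_j]₊ + h·[-b_j]₊` for `j ≠ i`, setting `ŷ = ∏ x_ℓ^{b_ℓ}` and
`X* = x_i⁻¹·(∏ x_ℓ^{[b_ℓ]₊} + ∏ x_ℓ^{[-b_ℓ]₊})`, one has
`(X*)^{-g_i} · ∏_{j≠i} x_j^{g'_j} · (1 + ŷ⁻¹)^{-h'} · (1 + ŷ)^{h} · ∏ x_ℓ^{-g_ℓ} = 1`. -/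
theorem substitution_identity
    (n : ℕ) (hn : 1 ≤ n) (i : Fin n) (b : Fin n → ℤ) (hb : b i = 0)
    (h h' : ℤ) (g g' : Fin n → ℤ)
    (hg : g i = h - h')
    (hg' : ∀ j : Fin n, j ≠ i → g' j = g j - h' * max (b j) 0 + h * max (- b j) 0) :
    let K := FractionRing (MvPolynomial (Fin n) ℚ)
    let x : Fin n → K := fun ℓ => algebraMap (MvPolynomial (Fin n) ℚ) K (X ℓ)
    let yhat : K := ∏ ℓ, x ℓ ^ (b ℓ)
    let Xstar : K := (x i)⁻¹ *
      ((∏ ℓ, x ℓ ^ (max (b ℓ) 0)) + ∏ ℓ, x ℓ ^ (max (- b ℓ) 0))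
    Xstar ^ (- g i) * (∏ j ∈ Finset.univ.erase i, x j ^ (g' j)) *
        (1 + yhat⁻¹) ^ (- h') * (1 + yhat) ^ h * (∏ ℓ, x ℓ ^ (- g ℓ)) = 1 :=
  substitution_identity_general n i b hb h h' g g' hg hg'
end
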